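/- Let d > m ≥ 1 be integers, t, c ∈ ℂ \ {0}, and Q(z) = t·z^d + c·z^m. Suppose θ₀ ∈ ℝ satisfies t·e^{i(d+2)θ₀} ∈ (0,∞) (L(θ₀) is an anti-Stokes ray of t z^d) and Q(r·e^{iθ₀}) ≠ 0 for all r > 0 (L(θ₀) contains no turning point of Q). Then there exists ε > 0 such that every θ ∈ (θ₀ − ε, θ₀ + ε) is a good ray for Q. -/

import Mathlib

/-!
Write `z = r e^{iθ}`, `u(θ) = t e^{i(d+2)θ}` and `v(θ) = c e^{i(m+2)θ}`, so that
`z² Q(z) = r^{d+2} u(θ) + r^{m+2} v(θ)`. The number `u(θ₀)` is positive, and `v(θ₀)` lies in the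
slit plane `ℂ \ (-∞, 0]`: otherwise `r^{d-m} = -v(θ₀) / u(θ₀)` would put a turning point on
`L(θ₀)`. Hence a real-linear functional `ℓ = a Re + b Im` with `a > 0` is positive at both
`u(θ₀)` and `v(θ₀)`, and by continuity at `u(θ)` and `v(θ)` for `θ` near `θ₀`. Then `ℓ` is
positive at `z² Q(z)` for every `r > 0`, whereas `ℓ(x) = a x ≤ 0` for every real `x ≤ 0`.
-/

open Complex

/-- The direction `θ` (i.e. the ray `L(θ) = {r e^{iθ} : r > 0}`) is a *good ray* for the
binomial `Q(z) = t z^d + c z^m`: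
(i) `L(θ)` is not a Stokes line of `t z^d dz²`;
(ii) `L(θ)` is not a Stokes line of `c z^m dz²`;
(iii) `L(θ)` contains no turning point of `Q`;
(iv) `L(θ)` is not tangent to any vertical trajectory of `Q(z)dz²`. -/
def GoodRay (d m : ℕ) (t c : ℂ) (θ : ℝ) : Prop :=
  (¬ ∃ x : ℝ, x < 0 ∧ t * Complex.exp ((((d : ℝ) + 2) * θ : ℂ) * Complex.I) = (x : ℂ)) ∧
  (¬ ∃ x : ℝ, x < 0 ∧ c * Complex.exp ((((m : ℝ) + 2) * θ : ℂ) * Complex.I) = (x : ℂ)) ∧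
  (∀ r : ℝ, 0 < r →
    t * ((r : ℂ) * Complex.exp ((θ : ℂ) * Complex.I)) ^ d +
      c * ((r : ℂ) * Complex.exp ((θ : ℂ) * Complex.I)) ^ m ≠ 0) ∧
  (∀ r : ℝ, 0 < r → ¬ ∃ x : ℝ, x ≤ 0 ∧
    ((r : ℂ) * Complex.exp ((θ : ℂ) * Complex.I)) ^ 2 *
      (t * ((r : ℂ) * Complex.exp ((θ : ℂ) * Complex.I)) ^ d +
       c * ((r : ℂ) * Complex.exp ((θ : ℂ) * Complex.I)) ^ m) = (x : ℂ))

lemma sq_mul_binomial_ray (d m : ℕ) (t c : ℂ) (θ r : ℝ) :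
    ((r : ℂ) * exp ((θ : ℂ) * I)) ^ 2 *
      (t * ((r : ℂ) * exp ((θ : ℂ) * I)) ^ d + c * ((r : ℂ) * exp ((θ : ℂ) * I)) ^ m)
    = ((r ^ (d + 2) : ℝ) : ℂ) * (t * exp ((((d : ℝ) + 2) * θ : ℂ) * I)) +
      ((r ^ (m + 2) : ℝ) : ℂ) * (c * exp ((((m : ℝ) + 2) * θ : ℂ) * I)) := by
  have exp_mul_eq_pow (k : ℕ) :
      exp ((((k : ℝ) + 2) * θ : ℂ) * I) = exp ((θ : ℂ) * I) ^ (k + 2) := by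
    rw [← exp_nat_mul]
    push_cast
    ring_nf
  rw [exp_mul_eq_pow d, exp_mul_eq_pow m]
  push_cast
  ring

lemma exists_pos_pow_mul_eq {d m : ℕ} (hdm : m < d) {x s : ℝ} (hx : 0 < x) (hs : 0 < s) :
    ∃ r > (0 : ℝ), r ^ d * x = r ^ m * s := by
  obtain ⟨n, rfl⟩ := Nat.exists_eq_add_of_lt hdm
  have hsx : 0 < s / x := div_pos hs hx
  refine ⟨(s / x) ^ ((n + 1 : ℕ) : ℝ)⁻¹, Real.rpow_pos_of_pos hsx _, ?_⟩
  rw [add_assoc, pow_add, Real.rpow_inv_natCast_pow hsx.le n.succ_ne_zero]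
  field_simp

lemma exists_re_im_functional_pos {v : ℂ} (hv : v ∈ slitPlane) :
    ∃ a > (0 : ℝ), ∃ b : ℝ, 0 < a * v.re + b * v.im := by
  by_cases hre : 0 < v.re
  · exact ⟨1, one_pos, 0, by simpa using hre⟩
  have him : v.im ≠ 0 := (mem_slitPlane_iff.mp hv).resolve_left hre
  have hpos : 0 < 1 - v.re := by linarith
  have key : v.im ^ 2 / (1 - v.re) * v.re + v.im * v.im = v.im ^ 2 / (1 - v.re) := by
    field_simp
    ring
  refine ⟨v.im ^ 2 / (1 - v.re), by positivity, v.im, ?_⟩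
  rw [key]
  positivity

lemma ne_ofReal_of_mul_lt_re_im (a b : ℝ) {x : ℝ} {w : ℂ} (h : a * x < a * w.re + b * w.im) :
    w ≠ x := by
  rintro rfl
  simp at h

lemma mem_slitPlane_of_no_turning_point {d m : ℕ} (hdm : m < d) {t c : ℂ} (hc : c ≠ 0)
    {θ₀ x₀ : ℝ} (hx₀ : 0 < x₀) (hu₀ : t * exp ((((d : ℝ) + 2) * θ₀ : ℂ) * I) = x₀)
    (hnoturn : ∀ r : ℝ, 0 < r →
      t * ((r : ℂ) * exp ((θ₀ : ℂ) * I)) ^ d + c * ((r : ℂ) * exp ((θ₀ : ℂ) * I)) ^ m ≠ 0) :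
    c * exp ((((m : ℝ) + 2) * θ₀ : ℂ) * I) ∈ slitPlane := by
  set v₀ := c * exp ((((m : ℝ) + 2) * θ₀ : ℂ) * I) with hv₀
  by_contra hv
  obtain ⟨hre, him⟩ : v₀.re ≤ 0 ∧ v₀.im = 0 := by
    simpa [mem_slitPlane_iff] using hv
  have hv₀_real : v₀ = v₀.re := ext rfl (by simpa using him)
  have hv₀_ne : v₀ ≠ 0 := mul_ne_zero hc (exp_ne_zero _)
  have hre_neg : v₀.re < 0 := hre.lt_of_ne fun h ↦ hv₀_ne (by rw [hv₀_real, h, ofReal_zero])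
  obtain ⟨r, hr, hrs⟩ :=
    exists_pos_pow_mul_eq (by omega : m + 2 < d + 2) hx₀ (neg_pos.mpr hre_neg)
  have hz : (r : ℂ) * exp ((θ₀ : ℂ) * I) ≠ 0 :=
    mul_ne_zero (ofReal_ne_zero.mpr hr.ne') (exp_ne_zero _)
  refine hnoturn r hr ((mul_eq_zero.mp ?_).resolve_left (pow_ne_zero 2 hz))
  rw [sq_mul_binomial_ray, hu₀, ← hv₀, hv₀_real]
  exact_mod_cast (by linarith : r ^ (d + 2) * x₀ + r ^ (m + 2) * v₀.re = 0)

lemma goodRay_of_re_im_functional {d m : ℕ} {t c : ℂ} {θ a b : ℝ} (ha : 0 < a)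
    (hu : 0 < a * (t * exp ((((d : ℝ) + 2) * θ : ℂ) * I)).re +
      b * (t * exp ((((d : ℝ) + 2) * θ : ℂ) * I)).im)
    (hv : 0 ≤ a * (c * exp ((((m : ℝ) + 2) * θ : ℂ) * I)).re +
      b * (c * exp ((((m : ℝ) + 2) * θ : ℂ) * I)).im) :
    GoodRay d m t c θ := by
  have hray : ∀ r : ℝ, 0 < r → ∀ x : ℝ, x ≤ 0 →
      ((r : ℂ) * exp ((θ : ℂ) * I)) ^ 2 *
        (t * ((r : ℂ) * exp ((θ : ℂ) * I)) ^ d + c * ((r : ℂ) * exp ((θ : ℂ) * I)) ^ m)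
        ≠ x := by
    intro r hr x hx
    rw [sq_mul_binomial_ray]
    apply ne_ofReal_of_mul_lt_re_im a b
    simp only [add_re, add_im, re_ofReal_mul, im_ofReal_mul]
    nlinarith [mul_pos (pow_pos hr (d + 2)) hu, mul_nonneg (pow_pos hr (m + 2)).le hv]
  refine ⟨?_, ?_, fun r hr hQ ↦ hray r hr 0 le_rfl ?_, fun r hr ⟨x, hx, h⟩ ↦ hray r hr x hx h⟩
  · rintro ⟨x, hx, h⟩
    exact ne_ofReal_of_mul_lt_re_im a b (by nlinarith) h
  · rintro ⟨x, hx, h⟩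
    exact ne_ofReal_of_mul_lt_re_im a b (by nlinarith) h
  · rw [hQ, mul_zero, ofReal_zero]

theorem good_subsector_exists_general
    (d m : ℕ) (hdm : m < d)
    (t c : ℂ) (hc : c ≠ 0) (θ₀ : ℝ)
    (hanti : ∃ x : ℝ, 0 < x ∧
      t * Complex.exp ((((d : ℝ) + 2) * θ₀ : ℂ) * Complex.I) = (x : ℂ))
    (hnoturn : ∀ r : ℝ, 0 < r →
      t * ((r : ℂ) * Complex.exp ((θ₀ : ℂ) * Complex.I)) ^ d +
        c * ((r : ℂ) * Complex.exp ((θ₀ : ℂ) * Complex.I)) ^ m ≠ 0) :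
    ∃ ε > (0 : ℝ), ∀ θ ∈ Set.Ioo (θ₀ - ε) (θ₀ + ε), GoodRay d m t c θ := by
  obtain ⟨x₀, hx₀, hu₀⟩ := hanti
  obtain ⟨a, ha, b, hv₀⟩ := exists_re_im_functional_pos
    (mem_slitPlane_of_no_turning_point hdm hc hx₀ hu₀ hnoturn)
  have hcont (k : ℕ) (w : ℂ) : Continuous fun θ : ℝ ↦
      a * (w * exp ((((k : ℝ) + 2) * θ : ℂ) * I)).re +
        b * (w * exp ((((k : ℝ) + 2) * θ : ℂ) * I)).im := by
    fun_prop
  have hu₀' : 0 < a * (t * exp ((((d : ℝ) + 2) * θ₀ : ℂ) * I)).re +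
      b * (t * exp ((((d : ℝ) + 2) * θ₀ : ℂ) * I)).im := by
    rw [hu₀]
    simpa using mul_pos ha hx₀
  obtain ⟨ε, hε, hball⟩ := Metric.eventually_nhds_iff_ball.mp
    (((hcont d t).tendsto θ₀).eventually_const_lt hu₀' |>.and
      (((hcont m c).tendsto θ₀).eventually_const_lt hv₀))
  refine ⟨ε, hε, fun θ hθ ↦ ?_⟩
  rw [← Real.ball_eq_Ioo] at hθ
  exact goodRay_of_re_im_functional ha (hball θ hθ).1 (hball θ hθ).2.le

/-- If `L(θ₀)` is an anti-Stokes ray of `t z^d` containing no turning point of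
`Q = t z^d + c z^m`, then all nearby rays are good rays for `Q`. -/
theorem good_subsector_exists
    (d m : ℕ) (hm : 1 ≤ m) (hdm : m < d)
    (t c : ℂ) (ht : t ≠ 0) (hc : c ≠ 0) (θ₀ : ℝ)
    (hanti : ∃ x : ℝ, 0 < x ∧
      t * Complex.exp ((((d : ℝ) + 2) * θ₀ : ℂ) * Complex.I) = (x : ℂ))
    (hnoturn : ∀ r : ℝ, 0 < r →
      t * ((r : ℂ) * Complex.exp ((θ₀ : ℂ) * Complex.I)) ^ d +
        c * ((r : ℂ) * Complex.exp ((θ₀ : ℂ) * Complex.I)) ^ m ≠ 0) :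
    ∃ ε > (0 : ℝ), ∀ θ ∈ Set.Ioo (θ₀ - ε) (θ₀ + ε), GoodRay d m t c θ :=
  good_subsector_exists_general d m hdm t c hc θ₀ hanti hnoturn
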